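/- arXiv:2006.03958 — 6 statements merged into one kernel-verified Lean document; each statement's English description precedes it below -/
import Mathlib

section
/- Let D > 0, λ > 0, and ε ∈ {+1,−1}. Along every solution (u₁(y), v₁(y), u₂(y), v₂(y)) of the sheet system u₁′ = u₂, v₁′ = u₁ + λ − ε√(λ² + 2u₁), D u₂′ = v₂, D v₂′ = −u₂ − v₁ with u₁(y) > −λ²/2, the function H_ε = u₂v₁ − u₁²/2 − λu₁ + (u₂² + v₂²)/2 + ε·(1/3)(λ² + 2u₁)^{3/2} is constant. -/
/-! Conservation of `H_ε` is a direct computation: differentiating `H_ε` along a solution, the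
`v₁`-equation cancels the polynomial terms together with `d/dy (ε/3)(λ² + 2u₁)^{3/2} = ε√(λ² + 2u₁) u₂`,
and the two equations for `u₂, v₂` cancel the remaining terms in `v₁v₂/D` and `u₂v₂/D`. -/

open Real

noncomputable def sheetHamiltonian (lam eps u1 v1 u2 v2 : ℝ) : ℝ :=
  u2 * v1 - u1 ^ 2 / 2 - lam * u1 + (u2 ^ 2 + v2 ^ 2) / 2
    + eps * (1 / 3) * (lam ^ 2 + 2 * u1) ^ ((3 : ℝ) / 2)

theorem HasDerivAt.rpow_three_halves {f : ℝ → ℝ} {f' x : ℝ} (hf : HasDerivAt f f' x) :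
    HasDerivAt (fun y => f y ^ ((3 : ℝ) / 2)) (f' * (3 / 2) * √(f x)) x := by
  have h := hf.rpow_const (p := 3 / 2) (Or.inr (by norm_num))
  rwa [show (3 : ℝ) / 2 - 1 = 1 / 2 by norm_num, ← sqrt_eq_rpow] at h

theorem hasDerivAt_sheetHamiltonian {D lam eps : ℝ} {u1 v1 u2 v2 : ℝ → ℝ} {y : ℝ}
    (h1 : HasDerivAt u1 (u2 y) y)
    (h2 : HasDerivAt v1 (u1 y + lam - eps * √(lam ^ 2 + 2 * u1 y)) y)
    (h3 : HasDerivAt u2 (v2 y / D) y)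
    (h4 : HasDerivAt v2 ((-u2 y - v1 y) / D) y) :
    HasDerivAt (fun y => sheetHamiltonian lam eps (u1 y) (v1 y) (u2 y) (v2 y)) 0 y := by
  have hroot : HasDerivAt (fun y => (lam ^ 2 + 2 * u1 y) ^ ((3 : ℝ) / 2))
      (2 * u2 y * (3 / 2) * √(lam ^ 2 + 2 * u1 y)) y :=
    ((h1.const_mul 2).const_add (lam ^ 2)).rpow_three_halves
  refine (((((h3.mul h2).sub ((h1.pow 2).div_const 2)).sub (h1.const_mul lam)).add
    (((h3.pow 2).add (h4.pow 2)).div_const 2)).add (hroot.const_mul (eps * (1 / 3)))).congr_deriv ?_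
  ring

theorem stmt_2_general (D lam eps : ℝ)
    (u1 v1 u2 v2 : ℝ → ℝ)
    (h1 : ∀ y, HasDerivAt u1 (u2 y) y)
    (h2 : ∀ y, HasDerivAt v1 (u1 y + lam - eps * Real.sqrt (lam ^ 2 + 2 * u1 y)) y)
    (h3 : ∀ y, HasDerivAt u2 (v2 y / D) y)
    (h4 : ∀ y, HasDerivAt v2 ((-u2 y - v1 y) / D) y) :
    ∀ y z : ℝ,
      u2 y * v1 y - (u1 y) ^ 2 / 2 - lam * u1 y + ((u2 y) ^ 2 + (v2 y) ^ 2) / 2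
        + eps * (1 / 3) * (lam ^ 2 + 2 * u1 y) ^ ((3 : ℝ) / 2)
      = u2 z * v1 z - (u1 z) ^ 2 / 2 - lam * u1 z + ((u2 z) ^ 2 + (v2 z) ^ 2) / 2
        + eps * (1 / 3) * (lam ^ 2 + 2 * u1 z) ^ ((3 : ℝ) / 2) := by
  have hH y := hasDerivAt_sheetHamiltonian (h1 y) (h2 y) (h3 y) (h4 y)
  exact is_const_of_deriv_eq_zero (fun y => (hH y).differentiableAt) (fun y => (hH y).deriv)

/-- the Hamiltonian
`H_ε = u₂v₁ − u₁²/2 − λu₁ + (u₂² + v₂²)/2 + ε(1/3)(λ² + 2u₁)^{3/2}`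
is constant along every solution of the sheet system
`u₁′ = u₂`, `v₁′ = u₁ + λ − ε√(λ² + 2u₁)`, `D u₂′ = v₂`, `D v₂′ = −u₂ − v₁`
staying in the region `u₁ > −λ²/2`. -/
theorem stmt_2 (D lam eps : ℝ) (hD : 0 < D) (hlam : 0 < lam)
    (heps : eps = 1 ∨ eps = -1)
    (u1 v1 u2 v2 : ℝ → ℝ)
    (hdom : ∀ y, u1 y > -lam ^ 2 / 2)
    (h1 : ∀ y, HasDerivAt u1 (u2 y) y)
    (h2 : ∀ y, HasDerivAt v1 (u1 y + lam - eps * Real.sqrt (lam ^ 2 + 2 * u1 y)) y)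
    (h3 : ∀ y, HasDerivAt u2 (v2 y / D) y)
    (h4 : ∀ y, HasDerivAt v2 ((-u2 y - v1 y) / D) y) :
    ∀ y z : ℝ,
      u2 y * v1 y - (u1 y) ^ 2 / 2 - lam * u1 y + ((u2 y) ^ 2 + (v2 y) ^ 2) / 2
        + eps * (1 / 3) * (lam ^ 2 + 2 * u1 y) ^ ((3 : ℝ) / 2)
      = u2 z * v1 z - (u1 z) ^ 2 / 2 - lam * u1 z + ((u2 z) ^ 2 + (v2 z) ^ 2) / 2
        + eps * (1 / 3) * (lam ^ 2 + 2 * u1 z) ^ ((3 : ℝ) / 2) :=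
  stmt_2_general D lam eps u1 v1 u2 v2 h1 h2 h3 h4
end

section
/- Let D > 0 and λ ∈ ℝ. Along every solution (r(s), v₁(s), u₂(s), v₂(s)) of the smooth reduced system dr/ds = u₂, dv₁/ds = λ(1−λ/2)r − r² + r³/2, D du₂/ds = r v₂, D dv₂/ds = −r(u₂ + v₁), the function H = u₂v₁ + (u₂² + v₂²)/2 − λ(1 − λ/2)r²/2 + r³/3 − r⁴/8 is constant. -/
/-! Along a solution, the terms of `H′` coming from `u₂′` and `v₂′` are `±r v₂ (u₂ + v₁) / D` and
cancel, while `u₂ v₁′ = −V′(r) r′` cancels the derivative of the potential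
`V(r) = −a r²/2 + r³/3 − r⁴/8`. So `H′ = 0` and `H` is constant by the mean value theorem. -/

/-- `H`, with `a` standing for `λ(1 − λ/2)`. -/
noncomputable def reducedHamiltonian (a r v1 u2 v2 : ℝ) : ℝ :=
  u2 * v1 + (u2 ^ 2 + v2 ^ 2) / 2 - a * r ^ 2 / 2 + r ^ 3 / 3 - r ^ 4 / 8

theorem hasDerivAt_reducedHamiltonian (D a : ℝ) {r v1 u2 v2 : ℝ → ℝ} {s : ℝ}
    (h1 : HasDerivAt r (u2 s) s)
    (h2 : HasDerivAt v1 (a * r s - r s ^ 2 + r s ^ 3 / 2) s)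
    (h3 : HasDerivAt u2 (r s * v2 s / D) s)
    (h4 : HasDerivAt v2 (-(r s * (u2 s + v1 s)) / D) s) :
    HasDerivAt (fun t => reducedHamiltonian a (r t) (v1 t) (u2 t) (v2 t)) 0 s := by
  refine (((((h3.mul h2).add (((h3.pow 2).add (h4.pow 2)).div_const 2)).sub
    (((h1.pow 2).const_mul a).div_const 2)).add ((h1.pow 3).div_const 3)).sub
    ((h1.pow 4).div_const 8)).congr_deriv ?_
  push_cast
  ring

theorem stmt_4_general (D lam : ℝ)
    (r v1 u2 v2 : ℝ → ℝ)
    (h1 : ∀ s, HasDerivAt r (u2 s) s)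
    (h2 : ∀ s, HasDerivAt v1 (lam * (1 - lam / 2) * r s - (r s) ^ 2 + (r s) ^ 3 / 2) s)
    (h3 : ∀ s, HasDerivAt u2 (r s * v2 s / D) s)
    (h4 : ∀ s, HasDerivAt v2 (-(r s * (u2 s + v1 s)) / D) s) :
    ∀ s t : ℝ,
      u2 s * v1 s + ((u2 s) ^ 2 + (v2 s) ^ 2) / 2 - lam * (1 - lam / 2) * (r s) ^ 2 / 2
        + (r s) ^ 3 / 3 - (r s) ^ 4 / 8
      = u2 t * v1 t + ((u2 t) ^ 2 + (v2 t) ^ 2) / 2 - lam * (1 - lam / 2) * (r t) ^ 2 / 2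
        + (r t) ^ 3 / 3 - (r t) ^ 4 / 8 := by
  have hH s := hasDerivAt_reducedHamiltonian D (lam * (1 - lam / 2)) (h1 s) (h2 s) (h3 s) (h4 s)
  exact is_const_of_deriv_eq_zero (fun s => (hH s).differentiableAt) (fun s => (hH s).deriv)

/-- the Hamiltonian
`H = u₂v₁ + (u₂² + v₂²)/2 − λ(1 − λ/2)r²/2 + r³/3 − r⁴/8`
is constant along every solution of the smooth reduced system
`r′ = u₂`, `v₁′ = λ(1−λ/2)r − r² + r³/2`, `D u₂′ = r v₂`, `D v₂′ = −r(u₂+v₁)`. -/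
theorem stmt_4 (D lam : ℝ) (hD : 0 < D)
    (r v1 u2 v2 : ℝ → ℝ)
    (h1 : ∀ s, HasDerivAt r (u2 s) s)
    (h2 : ∀ s, HasDerivAt v1 (lam * (1 - lam / 2) * r s - (r s) ^ 2 + (r s) ^ 3 / 2) s)
    (h3 : ∀ s, HasDerivAt u2 (r s * v2 s / D) s)
    (h4 : ∀ s, HasDerivAt v2 (-(r s * (u2 s + v1 s)) / D) s) :
    ∀ s t : ℝ,
      u2 s * v1 s + ((u2 s) ^ 2 + (v2 s) ^ 2) / 2 - lam * (1 - lam / 2) * (r s) ^ 2 / 2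
        + (r s) ^ 3 / 3 - (r s) ^ 4 / 8
      = u2 t * v1 t + ((u2 t) ^ 2 + (v2 t) ^ 2) / 2 - lam * (1 - lam / 2) * (r t) ^ 2 / 2
        + (r t) ^ 3 / 3 - (r t) ^ 4 / 8 :=
  stmt_4_general D lam r v1 u2 v2 h1 h2 h3 h4
end

section
/- Let D > 0. Along every solution (r(s), v₁(s), u₂(s), v₂(s)) of the system r′ = u₂, v₁′ = −r² + r³/2, D u₂′ = r v₂, D v₂′ = −r(u₂ + v₁) (the smooth reduced system with λ = 0), the function H₀ = u₂v₁ + (u₂² + v₂²)/2 + r³/3 − r⁴/8 is constant. -/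
noncomputable def reducedEnergy (r v1 u2 v2 : ℝ) : ℝ :=
  u2 * v1 + (u2 ^ 2 + v2 ^ 2) / 2 + r ^ 3 / 3 - r ^ 4 / 8

theorem HasDerivAt.reducedEnergy {r v1 u2 v2 : ℝ → ℝ} {r' v1' u2' v2' s : ℝ}
    (hr : HasDerivAt r r' s) (hv1 : HasDerivAt v1 v1' s) (hu2 : HasDerivAt u2 u2' s)
    (hv2 : HasDerivAt v2 v2' s) :
    HasDerivAt (fun s => reducedEnergy (r s) (v1 s) (u2 s) (v2 s))
      (u2' * v1 s + u2 s * v1' + u2 s * u2' + v2 s * v2' + (r s ^ 2 - r s ^ 3 / 2) * r') s := by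
  have h := (((hu2.mul hv1).add (((hu2.pow 2).add (hv2.pow 2)).div_const 2)).add
    ((hr.pow 3).div_const 3)).sub ((hr.pow 4).div_const 8)
  refine h.congr_deriv ?_
  norm_num
  ring

/-- The `1 / D` terms cancel, `v₂ · r(u₂ + v₁) = (u₂ + v₁) · r v₂`, and what remains is
`u₂ v₁′ + (r² − r³/2) r′ = 0`. -/
theorem hasDerivAt_reducedEnergy_eq_zero {D : ℝ} {r v1 u2 v2 : ℝ → ℝ} {s : ℝ}
    (hr : HasDerivAt r (u2 s) s) (hv1 : HasDerivAt v1 (-(r s) ^ 2 + (r s) ^ 3 / 2) s)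
    (hu2 : HasDerivAt u2 (r s * v2 s / D) s)
    (hv2 : HasDerivAt v2 (-(r s * (u2 s + v1 s)) / D) s) :
    HasDerivAt (fun s => reducedEnergy (r s) (v1 s) (u2 s) (v2 s)) 0 s :=
  (hr.reducedEnergy hv1 hu2 hv2).congr_deriv (by ring)

theorem stmt_10_general (D : ℝ)
    (r v1 u2 v2 : ℝ → ℝ)
    (h1 : ∀ s, HasDerivAt r (u2 s) s)
    (h2 : ∀ s, HasDerivAt v1 (-(r s) ^ 2 + (r s) ^ 3 / 2) s)
    (h3 : ∀ s, HasDerivAt u2 (r s * v2 s / D) s)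
    (h4 : ∀ s, HasDerivAt v2 (-(r s * (u2 s + v1 s)) / D) s) :
    ∀ s t : ℝ,
      u2 s * v1 s + ((u2 s) ^ 2 + (v2 s) ^ 2) / 2 + (r s) ^ 3 / 3 - (r s) ^ 4 / 8
      = u2 t * v1 t + ((u2 t) ^ 2 + (v2 t) ^ 2) / 2 + (r t) ^ 3 / 3 - (r t) ^ 4 / 8 := by
  have hH (s : ℝ) := hasDerivAt_reducedEnergy_eq_zero (h1 s) (h2 s) (h3 s) (h4 s)
  exact is_const_of_deriv_eq_zero (fun s => (hH s).differentiableAt) (fun s => (hH s).deriv)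

/-- the function `H₀ = u₂v₁ + (u₂² + v₂²)/2 + r³/3 − r⁴/8` is constant
along every solution of the `λ = 0` smooth reduced system
`r′ = u₂`, `v₁′ = −r² + r³/2`, `D u₂′ = r v₂`, `D v₂′ = −r(u₂+v₁)`. -/
theorem stmt_10 (D : ℝ) (hD : 0 < D)
    (r v1 u2 v2 : ℝ → ℝ)
    (h1 : ∀ s, HasDerivAt r (u2 s) s)
    (h2 : ∀ s, HasDerivAt v1 (-(r s) ^ 2 + (r s) ^ 3 / 2) s)
    (h3 : ∀ s, HasDerivAt u2 (r s * v2 s / D) s)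
    (h4 : ∀ s, HasDerivAt v2 (-(r s * (u2 s + v1 s)) / D) s) :
    ∀ s t : ℝ,
      u2 s * v1 s + ((u2 s) ^ 2 + (v2 s) ^ 2) / 2 + (r s) ^ 3 / 3 - (r s) ^ 4 / 8
      = u2 t * v1 t + ((u2 t) ^ 2 + (v2 t) ^ 2) / 2 + (r t) ^ 3 / 3 - (r t) ^ 4 / 8 :=
  stmt_10_general D r v1 u2 v2 h1 h2 h3 h4
end

section
/- Let D > 0 and 0 < λ < 1 with 4D²(1−λ)/(2−λ) < 1. Then every complex root σ of the polynomial D²σ⁴ + σ² + (1−λ)/(2−λ) is nonzero and purely imaginary, and the roots are given by σ² = (−1 ± √(1 − 4D²(1−λ)/(2−λ)))/(2D²), both values of σ² being negative real numbers. In particular the second equilibrium (2(1−λ),0,0,0) of the upper-sheet system is an elliptic point. -/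
/-! The characteristic polynomial is a quadratic in `σ²` with positive coefficients and positive
discriminant, so both values of `σ²` are negative reals, and a square root of a negative real is
nonzero and purely imaginary. -/

theorem Complex.re_eq_zero_of_sq_eq_ofReal {σ : ℂ} {r : ℝ} (hr : r < 0) (h : σ ^ 2 = r) :
    σ.re = 0 := by
  have hre : σ.re * σ.re - σ.im * σ.im = r := by simpa [sq] using congrArg Complex.re h
  have him : σ.re * σ.im + σ.im * σ.re = 0 := by simpa [sq] using congrArg Complex.im h
  rcases mul_eq_zero.mp (by linarith : σ.re * σ.im = 0) with hre0 | him0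
  · exact hre0
  · nlinarith

theorem Complex.ne_zero_of_sq_eq_ofReal {σ : ℂ} {r : ℝ} (hr : r ≠ 0) (h : σ ^ 2 = r) :
    σ ≠ 0 := by
  rintro rfl
  exact hr (by simpa using h.symm)

theorem quadratic_roots_neg {a c : ℝ} (ha : 0 < a) (hc : 0 < c) :
    (-1 + √(1 - 4 * a * c)) / (2 * a) < 0 ∧ (-1 - √(1 - 4 * a * c)) / (2 * a) < 0 := by
  have hs : √(1 - 4 * a * c) < 1 := (Real.sqrt_lt' one_pos).mpr (by nlinarith)
  have hs' : 0 ≤ √(1 - 4 * a * c) := Real.sqrt_nonneg _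
  exact ⟨div_neg_of_neg_of_pos (by linarith) (by positivity),
    div_neg_of_neg_of_pos (by linarith) (by positivity)⟩

theorem biquadratic_eq_zero_iff {a c : ℝ} (ha : a ≠ 0) (hdisc : 4 * a * c ≤ 1) (σ : ℂ) :
    (a : ℂ) * σ ^ 4 + σ ^ 2 + c = 0 ↔
      σ ^ 2 = (((-1 + √(1 - 4 * a * c)) / (2 * a) : ℝ) : ℂ) ∨
        σ ^ 2 = (((-1 - √(1 - 4 * a * c)) / (2 * a) : ℝ) : ℂ) := by
  have hdiscrim : discrim (a : ℂ) 1 c = (√(1 - 4 * a * c) : ℂ) * √(1 - 4 * a * c) := by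
    rw [← Complex.ofReal_mul, Real.mul_self_sqrt (by linarith), discrim]
    push_cast
    ring
  have := quadratic_eq_zero_iff (Complex.ofReal_ne_zero.mpr ha) hdiscrim (σ ^ 2)
  push_cast
  rw [← this]
  ring_nf

theorem stmt_14_general (D lam : ℝ) (hD : 0 < D) (h1 : lam < 1)
    (hdisc : 4 * D ^ 2 * (1 - lam) / (2 - lam) < 1) :
    let rp : ℝ := (-1 + Real.sqrt (1 - 4 * D ^ 2 * (1 - lam) / (2 - lam))) / (2 * D ^ 2)
    let rm : ℝ := (-1 - Real.sqrt (1 - 4 * D ^ 2 * (1 - lam) / (2 - lam))) / (2 * D ^ 2)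
    (∀ σ : ℂ, (D : ℂ) ^ 2 * σ ^ 4 + σ ^ 2 + (((1 - lam) / (2 - lam) : ℝ) : ℂ) = 0 →
      σ ≠ 0 ∧ σ.re = 0) ∧
    (∀ σ : ℂ, ((D : ℂ) ^ 2 * σ ^ 4 + σ ^ 2 + (((1 - lam) / (2 - lam) : ℝ) : ℂ) = 0 ↔
      (σ ^ 2 = (rp : ℂ) ∨ σ ^ 2 = (rm : ℂ)))) ∧
    rp < 0 ∧ rm < 0 := by
  simp only [mul_div_assoc] at hdisc ⊢
  set c := (1 - lam) / (2 - lam)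
  have hc : 0 < c := div_pos (by linarith) (by linarith)
  have hroots := biquadratic_eq_zero_iff (pow_ne_zero 2 hD.ne') hdisc.le
  simp only [Complex.ofReal_pow] at hroots
  obtain ⟨hrp, hrm⟩ := quadratic_roots_neg (pow_pos hD 2) hc
  refine ⟨fun σ hσ => ?_, hroots, hrp, hrm⟩
  rcases (hroots σ).mp hσ with h | h
  · exact ⟨Complex.ne_zero_of_sq_eq_ofReal hrp.ne h, Complex.re_eq_zero_of_sq_eq_ofReal hrp h⟩
  · exact ⟨Complex.ne_zero_of_sq_eq_ofReal hrm.ne h, Complex.re_eq_zero_of_sq_eq_ofReal hrm h⟩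

/-- for `D > 0`, `0 < λ < 1` with `4D²(1−λ)/(2−λ) < 1`, every complex root of
`D²σ⁴ + σ² + (1−λ)/(2−λ)` is nonzero and purely imaginary, and the roots satisfy
`σ² = (−1 ± √(1 − 4D²(1−λ)/(2−λ)))/(2D²)`, both values being negative reals; in particular
the equilibrium `(2(1−λ),0,0,0)` of the upper-sheet system is an elliptic point. -/
theorem stmt_14 (D lam : ℝ) (hD : 0 < D) (h0 : 0 < lam) (h1 : lam < 1)
    (hdisc : 4 * D ^ 2 * (1 - lam) / (2 - lam) < 1) :
    let rp : ℝ := (-1 + Real.sqrt (1 - 4 * D ^ 2 * (1 - lam) / (2 - lam))) / (2 * D ^ 2)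
    let rm : ℝ := (-1 - Real.sqrt (1 - 4 * D ^ 2 * (1 - lam) / (2 - lam))) / (2 * D ^ 2)
    (∀ σ : ℂ, (D : ℂ) ^ 2 * σ ^ 4 + σ ^ 2 + (((1 - lam) / (2 - lam) : ℝ) : ℂ) = 0 →
      σ ≠ 0 ∧ σ.re = 0) ∧
    (∀ σ : ℂ, ((D : ℂ) ^ 2 * σ ^ 4 + σ ^ 2 + (((1 - lam) / (2 - lam) : ℝ) : ℂ) = 0 ↔
      (σ ^ 2 = (rp : ℂ) ∨ σ ^ 2 = (rm : ℂ)))) ∧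
    rp < 0 ∧ rm < 0 :=
  stmt_14_general D lam hD h1 hdisc
end

section
/- Let D² > 1/4 and λ > λ₀ where λ₀ = 4D²/(4D² − 1). Then every complex root σ of the polynomial D²σ⁴ + σ² − (1−λ)/λ has nonzero real part and nonzero imaginary part; in particular the polynomial has no real roots and no purely imaginary roots, so the equilibrium O of the upper-sheet system is a saddle-focus. -/
/-!
Substituting `s = σ²` turns the quartic into the quadratic `D² s² + s − (1−λ)/λ`, whose
discriminant `1 + 4D²(1−λ)/λ` is negative once `λ > 4D²/(4D²−1)`. A root `σ` on the
real or the imaginary axis would have `σ²` real, giving a real root of that quadratic.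
-/

lemma sq_eq_ofReal_re_of_re_mul_im_eq_zero {σ : ℂ} (h : σ.re * σ.im = 0) :
    σ ^ 2 = ((σ ^ 2).re : ℂ) := by
  apply Complex.ext
  · simp
  · simp only [sq, Complex.mul_im, Complex.ofReal_im]
    linarith

lemma re_mul_im_ne_zero_of_biquadratic_eq_zero {a b c : ℝ} (hd : discrim a b c < 0) {σ : ℂ}
    (hσ : (a : ℂ) * σ ^ 4 + b * σ ^ 2 + c = 0) : σ.re * σ.im ≠ 0 := by
  intro hσ_axis
  set s := (σ ^ 2).re
  have hs : σ ^ 2 = s := sq_eq_ofReal_re_of_re_mul_im_eq_zero hσ_axis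
  have hroot : ((a * (s * s) + b * s + c : ℝ) : ℂ) = 0 := by
    rw [← hσ, show σ ^ 4 = (σ ^ 2) ^ 2 by ring, hs]
    push_cast
    ring
  exact quadratic_ne_zero_of_discrim_ne_sq (fun t => (hd.trans_le (sq_nonneg t)).ne) s
    (Complex.ofReal_eq_zero.mp hroot)

lemma discrim_neg_of_threshold_lt {D lam : ℝ} (hD2 : 1 / 4 < D ^ 2)
    (hlam : 4 * D ^ 2 / (4 * D ^ 2 - 1) < lam) :
    discrim (D ^ 2) 1 (-((1 - lam) / lam)) < 0 := by
  have hden : 0 < 4 * D ^ 2 - 1 := by linarith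
  have hlam_pos : 0 < lam := lt_trans (div_pos (by linarith) hden) hlam
  have hkey : lam < 4 * D ^ 2 * (lam - 1) := by
    have := (div_lt_iff₀ hden).mp hlam
    linarith
  have hdisc : discrim (D ^ 2) 1 (-((1 - lam) / lam)) = (lam - 4 * D ^ 2 * (lam - 1)) / lam := by
    rw [discrim]
    field_simp
    ring
  rw [hdisc]
  exact div_neg_of_neg_of_pos (by linarith) hlam_pos

theorem stmt_16_general (D lam : ℝ) (hD2 : 1 / 4 < D ^ 2)
    (hlam : 4 * D ^ 2 / (4 * D ^ 2 - 1) < lam) :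
    ∀ σ : ℂ, (D : ℂ) ^ 2 * σ ^ 4 + σ ^ 2 - (((1 - lam) / lam : ℝ) : ℂ) = 0 →
      σ.re ≠ 0 ∧ σ.im ≠ 0 := by
  intro σ hσ
  refine mul_ne_zero_iff.mp
    (re_mul_im_ne_zero_of_biquadratic_eq_zero (discrim_neg_of_threshold_lt hD2 hlam) ?_)
  rw [← hσ]
  push_cast
  ring

/-- for `D² > 1/4` and `λ > λ₀ = 4D²/(4D²−1)`, every complex root of
`D²σ⁴ + σ² − (1−λ)/λ` has nonzero real part and nonzero imaginary part; in particular
this polynomial has no real and no purely imaginary roots, so the equilibrium `O` of the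
upper-sheet system is a saddle-focus. -/
theorem stmt_16 (D lam : ℝ) (hD : 0 < D) (hD2 : 1 / 4 < D ^ 2)
    (hlam : 4 * D ^ 2 / (4 * D ^ 2 - 1) < lam) :
    ∀ σ : ℂ, (D : ℂ) ^ 2 * σ ^ 4 + σ ^ 2 - (((1 - lam) / lam : ℝ) : ℂ) = 0 →
      σ.re ≠ 0 ∧ σ.im ≠ 0 :=
  stmt_16_general D lam hD2 hlam
end

section
/- Let 0 < D² < 1/4 and set λ₋ = 4D²/(4D² − 1) (so λ₋ < 0). Consider the polynomial D²σ⁴ + σ² − (1−λ)/λ for λ < 0. Then: (1) if λ₋ < λ < 0, every complex root has nonzero real part and nonzero imaginary part (the equilibrium O on the lower sheet is a saddle-focus); (2) if λ < λ₋, every complex root is nonzero and purely imaginary (O is an elliptic point). Moreover, (3) if D² ≥ 1/4, then for every λ < 0 every complex root has nonzero real part and nonzero imaginary part. -/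
/-!
Substituting `τ = σ²` turns the quartic into the real quadratic `D²τ² + τ − c` with
`c = (1 − λ)/λ < 0` and discriminant `1 + 4D²c`, which for `λ < 0` is negative exactly
when `λ(4D² − 1) < 4D²`, i.e. when `λ₋ < λ` (always, if `D² ≥ 1/4`). A negative
discriminant makes `τ` non-real, and since `Im(σ²) = 2 Re σ Im σ` neither part of `σ`
vanishes. Otherwise both roots `τ` are real, and negative because all coefficients of
`D²τ² + τ − c` are positive, so `σ` is purely imaginary.
-/

namespace Complex

lemma re_ne_zero_and_im_ne_zero_of_sq_im_ne_zero {σ : ℂ} (h : (σ ^ 2).im ≠ 0) :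
    σ.re ≠ 0 ∧ σ.im ≠ 0 := by
  rw [sq, mul_im] at h
  constructor <;> rintro h0 <;> simp [h0] at h

lemma re_eq_zero_of_sq_eq_ofReal_neg {σ : ℂ} {r : ℝ} (hr : r < 0) (h : σ ^ 2 = r) :
    σ.re = 0 := by
  have him : σ.re * σ.im = 0 := by
    have := congrArg im h
    rw [sq, mul_im, ofReal_im] at this
    linarith
  have hre : σ.re ^ 2 - σ.im ^ 2 = r := by
    have := congrArg re h
    rwa [sq, mul_re, ofReal_re, ← sq, ← sq] at this
  rcases mul_eq_zero.mp him with h0 | h0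
  · exact h0
  · nlinarith [sq_nonneg σ.re]

variable {a b c : ℝ}

lemma im_eq_zero_of_quadratic_eq_zero (ha : a ≠ 0) (hΔ : 0 ≤ discrim a b c) {τ : ℂ}
    (h : a * (τ * τ) + b * τ + c = 0) : τ.im = 0 := by
  set s := √(discrim a b c)
  have hs : discrim (a : ℂ) b c = s * s := by
    rw [← ofReal_mul, Real.mul_self_sqrt hΔ]
    simp [discrim]
  rcases (quadratic_eq_zero_iff (ofReal_ne_zero.mpr ha) hs τ).mp h with rfl | rfl
  · rw [show (-b + s) / (2 * a) = (((-b + s) / (2 * a) : ℝ) : ℂ) by push_cast; ring, ofReal_im]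
  · rw [show (-b - s) / (2 * a) = (((-b - s) / (2 * a) : ℝ) : ℂ) by push_cast; ring, ofReal_im]

lemma im_ne_zero_of_quadratic_eq_zero (hΔ : discrim a b c < 0) {τ : ℂ}
    (h : a * (τ * τ) + b * τ + c = 0) : τ.im ≠ 0 := by
  intro him
  have hreal : a * (τ.re * τ.re) + b * τ.re + c = 0 := by
    rw [← re_add_im τ, him, ofReal_zero, zero_mul, add_zero] at h
    exact_mod_cast h
  have := discrim_eq_sq_of_quadratic_eq_zero hreal
  nlinarith [sq_nonneg (2 * a * τ.re + b)]

end Complex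

lemma neg_of_quadratic_eq_zero {a b c x : ℝ} (ha : 0 ≤ a) (hb : 0 < b) (hc : 0 < c)
    (h : a * (x * x) + b * x + c = 0) : x < 0 := by
  by_contra! hx
  nlinarith [mul_nonneg ha (mul_self_nonneg x)]

section BiquadraticRoots

variable {a c : ℝ} {σ : ℂ}

lemma sq_quadratic_eq_zero_of_biquadratic_eq_zero (h : (a : ℂ) * σ ^ 4 + σ ^ 2 - c = 0) :
    (a : ℂ) * (σ ^ 2 * σ ^ 2) + ((1 : ℝ) : ℂ) * σ ^ 2 + ((-c : ℝ) : ℂ) = 0 := by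
  push_cast
  linear_combination h

lemma discrim_one_neg (a c : ℝ) : discrim a 1 (-c) = 1 + 4 * a * c := by
  rw [discrim]
  ring

lemma biquadratic_roots_re_ne_zero_and_im_ne_zero (hΔ : 1 + 4 * a * c < 0)
    (h : (a : ℂ) * σ ^ 4 + σ ^ 2 - c = 0) : σ.re ≠ 0 ∧ σ.im ≠ 0 :=
  Complex.re_ne_zero_and_im_ne_zero_of_sq_im_ne_zero <|
    Complex.im_ne_zero_of_quadratic_eq_zero (discrim_one_neg a c ▸ hΔ)
      (sq_quadratic_eq_zero_of_biquadratic_eq_zero h)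

lemma biquadratic_roots_ne_zero_and_re_eq_zero (ha : 0 < a) (hc : c < 0)
    (hΔ : 0 ≤ 1 + 4 * a * c) (h : (a : ℂ) * σ ^ 4 + σ ^ 2 - c = 0) :
    σ ≠ 0 ∧ σ.re = 0 := by
  refine ⟨?_, ?_⟩
  · rintro rfl
    exact hc.ne (by simpa using h)
  have hquad := sq_quadratic_eq_zero_of_biquadratic_eq_zero h
  have him :=
    Complex.im_eq_zero_of_quadratic_eq_zero ha.ne' (discrim_one_neg a c ▸ hΔ) hquad
  have hτ : σ ^ 2 = ((σ ^ 2).re : ℂ) := Complex.ext (by simp) (by simp [him])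
  rw [hτ] at hquad
  have hneg : (σ ^ 2).re < 0 :=
    neg_of_quadratic_eq_zero ha.le one_pos (neg_pos.mpr hc) (by exact_mod_cast hquad)
  exact Complex.re_eq_zero_of_sq_eq_ofReal_neg hneg hτ

end BiquadraticRoots

lemma one_add_four_mul_one_sub_div_neg_iff {a lam : ℝ} (hlam : lam < 0) :
    1 + 4 * a * ((1 - lam) / lam) < 0 ↔ lam * (4 * a - 1) < 4 * a := by
  rw [show 1 + 4 * a * ((1 - lam) / lam) = (4 * a - lam * (4 * a - 1)) / lam by
      field_simp [hlam.ne]; ring, div_neg_iff]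
  constructor
  · rintro (⟨h, -⟩ | ⟨-, h⟩) <;> linarith
  · intro h
    exact Or.inl ⟨by linarith, hlam⟩

/-- roots of `D²σ⁴ + σ² − (1−λ)/λ` for `λ < 0` (the characteristic equation
at the equilibrium `O` on the lower sheet), with `λ₋ = 4D²/(4D²−1)`:
(1) for `0 < D² < 1/4` and `λ₋ < λ < 0` every root has nonzero real and imaginary parts
(`O` is a saddle-focus); (2) for `0 < D² < 1/4` and `λ < λ₋` every root is nonzero and
purely imaginary (`O` is an elliptic point); (3) for `D² ≥ 1/4` and any `λ < 0` every
root has nonzero real and imaginary parts. -/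
theorem stmt_19 (D : ℝ) (hD : 0 < D) :
    (D ^ 2 < 1 / 4 → ∀ lam : ℝ, lam < 0 → 4 * D ^ 2 / (4 * D ^ 2 - 1) < lam →
      ∀ σ : ℂ, (D : ℂ) ^ 2 * σ ^ 4 + σ ^ 2 - (((1 - lam) / lam : ℝ) : ℂ) = 0 →
        σ.re ≠ 0 ∧ σ.im ≠ 0) ∧
    (D ^ 2 < 1 / 4 → ∀ lam : ℝ, lam < 0 → lam < 4 * D ^ 2 / (4 * D ^ 2 - 1) →
      ∀ σ : ℂ, (D : ℂ) ^ 2 * σ ^ 4 + σ ^ 2 - (((1 - lam) / lam : ℝ) : ℂ) = 0 →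
        σ ≠ 0 ∧ σ.re = 0) ∧
    (1 / 4 ≤ D ^ 2 → ∀ lam : ℝ, lam < 0 →
      ∀ σ : ℂ, (D : ℂ) ^ 2 * σ ^ 4 + σ ^ 2 - (((1 - lam) / lam : ℝ) : ℂ) = 0 →
        σ.re ≠ 0 ∧ σ.im ≠ 0) := by
  have hroot {lam : ℝ} {σ : ℂ}
      (h : (D : ℂ) ^ 2 * σ ^ 4 + σ ^ 2 - (((1 - lam) / lam : ℝ) : ℂ) = 0) :
      ((D ^ 2 : ℝ) : ℂ) * σ ^ 4 + σ ^ 2 - (((1 - lam) / lam : ℝ) : ℂ) = 0 := by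
    rwa [Complex.ofReal_pow]
  refine ⟨fun hD2 lam hlam hgt σ h => ?_, fun hD2 lam hlam hlt σ h => ?_,
    fun hD2 lam hlam σ h => ?_⟩
  · have hΔ := (one_add_four_mul_one_sub_div_neg_iff hlam).mpr
      ((div_lt_iff_of_neg (by linarith)).mp hgt)
    exact biquadratic_roots_re_ne_zero_and_im_ne_zero hΔ (hroot h)
  · have hΔ := le_of_not_gt fun hneg =>
      ((one_add_four_mul_one_sub_div_neg_iff hlam).mp hneg).asymm
        ((lt_div_iff_of_neg (by linarith)).mp hlt)
    exact biquadratic_roots_ne_zero_and_re_eq_zero (by positivity)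
      (div_neg_of_pos_of_neg (by linarith) hlam) hΔ (hroot h)
  · have hΔ := (one_add_four_mul_one_sub_div_neg_iff (a := D ^ 2) hlam).mpr
      (by nlinarith [mul_nonneg (neg_nonneg.mpr hlam.le) (sub_nonneg.mpr hD2)])
    exact biquadratic_roots_re_ne_zero_and_im_ne_zero hΔ (hroot h)
end
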